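/- (Proposition 1, density correction.) Let ω : ℝ → (0, ∞) be twice differentiable and define P(κ) = exp κ · Φ(z₊(κ)) − Φ(z₋(κ)) with z_±(κ) = (κ ± ω(κ)²/2)/ω(κ). Then the implied density ψ(κ) := d/dκ [exp(−κ) P'(κ)] exists and equals ψ_BS^ω(κ) · ξ^ω(κ), where ψ_BS^ω(κ) = φ(z₊(κ))/ω(κ) is the Black–Scholes quasi-PDF and ξ^ω(κ) = (1 − (κ/ω(κ)) ω'(κ))² − (1/4)(ω(κ) ω'(κ))² + ω(κ) ω''(κ) is the correction multiplier. -/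

import Mathlib

open MeasureTheory Real

/-- Standard normal probability density function. -/
noncomputable def stdNormalPDF (z : ℝ) : ℝ := Real.exp (-z ^ 2 / 2) / Real.sqrt (2 * Real.pi)

/-- Standard normal cumulative distribution function. -/
noncomputable def stdNormalCDF (z : ℝ) : ℝ := ∫ u in Set.Iic z, stdNormalPDF u

/-!
Write `z₊`, `z₋` for the pivots. Since `z₋ = z₊ - ω` and `z₊² - z₋² = 2κ`, the Gaussian density
satisfies `φ(z₋) = eᵏ φ(z₊)`. In the derivative of `P` the two density terms then combine, leaving
`e^{-κ} P' = Φ(z₊) + φ(z₊) ω'`. Differentiating once more and using `φ' = -z φ`, the multiplier of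
`φ(z₊)` is `z₊' (1 - z₊ ω') + ω''`; with `a = 1 - (κ/ω) ω'` this is
`(a + ω ω'/2)(a - ω ω'/2) / ω + ω''`, i.e. `ξ / ω`.
-/

lemma integrable_stdNormalPDF : Integrable stdNormalPDF := by
  convert (integrable_exp_neg_mul_sq (by norm_num : (0 : ℝ) < 1 / 2)).div_const
    (√(2 * π)) using 2 with x
  unfold stdNormalPDF
  ring_nf

lemma continuous_stdNormalPDF : Continuous stdNormalPDF := by
  unfold stdNormalPDF
  fun_prop

lemma hasDerivAt_stdNormalCDF (z : ℝ) : HasDerivAt stdNormalCDF (stdNormalPDF z) z := by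
  have split : ∀ x, stdNormalCDF x = stdNormalCDF 0 + ∫ u in (0 : ℝ)..x, stdNormalPDF u := by
    intro x
    have := intervalIntegral.integral_Iic_sub_Iic (μ := volume) (a := 0) (b := x)
      integrable_stdNormalPDF.integrableOn integrable_stdNormalPDF.integrableOn
    unfold stdNormalCDF
    linarith
  refine HasDerivAt.congr_of_eventuallyEq ?_ (Filter.Eventually.of_forall split)
  exact (intervalIntegral.integral_hasDerivAt_right integrable_stdNormalPDF.intervalIntegrable
    continuous_stdNormalPDF.aestronglyMeasurable.stronglyMeasurableAtFilter
    continuous_stdNormalPDF.continuousAt).const_add _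

lemma hasDerivAt_stdNormalPDF (z : ℝ) : HasDerivAt stdNormalPDF (-z * stdNormalPDF z) z := by
  have hexponent : HasDerivAt (fun x : ℝ => -x ^ 2 / 2) (-z) z := by
    simpa using ((hasDerivAt_pow 2 z).neg.div_const 2).congr_deriv (by push_cast; ring)
  unfold stdNormalPDF
  exact (hexponent.exp.div_const _).congr_deriv (by ring)

lemma pivot_sub_eq {w : ℝ} (hw : w ≠ 0) (κ : ℝ) :
    (κ - w ^ 2 / 2) / w = (κ + w ^ 2 / 2) / w - w := by
  field_simp
  ring

lemma stdNormalPDF_pivot_sub {w : ℝ} (hw : w ≠ 0) (κ : ℝ) :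
    stdNormalPDF ((κ - w ^ 2 / 2) / w) = exp κ * stdNormalPDF ((κ + w ^ 2 / 2) / w) := by
  unfold stdNormalPDF
  rw [mul_div_assoc', ← exp_add, pivot_sub_eq hw]
  congr 2
  field_simp
  ring

lemma HasDerivAt.pivot {ω : ℝ → ℝ} {w' κ : ℝ} (c : ℝ) (hω : HasDerivAt ω w' κ)
    (hκ : ω κ ≠ 0) :
    HasDerivAt (fun k => (k + c * ω k ^ 2) / ω k) ((1 - κ / ω κ * w') / ω κ + c * w') κ := by
  have hnum : HasDerivAt (fun k => k + c * ω k ^ 2) (1 + c * (2 * ω κ ^ 1 * w')) κ := by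
    simpa using (hasDerivAt_id' κ).fun_add ((hω.pow 2).const_mul c)
  refine (hnum.div hω hκ).congr_deriv ?_
  field_simp
  ring

lemma HasDerivAt.pivot_add {ω : ℝ → ℝ} {w' κ : ℝ} (hω : HasDerivAt ω w' κ) (hκ : ω κ ≠ 0) :
    HasDerivAt (fun k => (k + ω k ^ 2 / 2) / ω k) ((1 - κ / ω κ * w') / ω κ + w' / 2) κ := by
  convert hω.pivot (1 / 2) hκ using 1 <;> ring_nf

lemma HasDerivAt.pivot_sub {ω : ℝ → ℝ} {w' κ : ℝ} (hω : HasDerivAt ω w' κ) (hκ : ω κ ≠ 0) :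
    HasDerivAt (fun k => (k - ω k ^ 2 / 2) / ω k) ((1 - κ / ω κ * w') / ω κ - w' / 2) κ := by
  convert hω.pivot (-1 / 2) hκ using 1 <;> ring_nf

lemma hasDerivAt_putPrice {ω : ℝ → ℝ} {w' κ : ℝ} (hω : HasDerivAt ω w' κ) (hκ : ω κ ≠ 0) :
    HasDerivAt (fun k => exp k * stdNormalCDF ((k + ω k ^ 2 / 2) / ω k)
        - stdNormalCDF ((k - ω k ^ 2 / 2) / ω k))
      (exp κ * (stdNormalCDF ((κ + ω κ ^ 2 / 2) / ω κ)
        + stdNormalPDF ((κ + ω κ ^ 2 / 2) / ω κ) * w')) κ := by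
  have hplus := hω.pivot_add hκ
  have hminus := hω.pivot_sub hκ
  refine (((hasDerivAt_exp κ).mul ((hasDerivAt_stdNormalCDF _).comp κ hplus)).sub
    ((hasDerivAt_stdNormalCDF _).comp κ hminus)).congr_deriv ?_
  rw [Function.comp_apply, stdNormalPDF_pivot_sub hκ]
  ring

lemma exp_neg_mul_deriv_putPrice {ω ω' : ℝ → ℝ} (hω : ∀ κ, HasDerivAt ω (ω' κ) κ)
    (hne : ∀ κ, ω κ ≠ 0) :
    (fun κ => exp (-κ) * deriv (fun k => exp k * stdNormalCDF ((k + ω k ^ 2 / 2) / ω k)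
        - stdNormalCDF ((k - ω k ^ 2 / 2) / ω k)) κ)
      = fun κ => stdNormalCDF ((κ + ω κ ^ 2 / 2) / ω κ)
        + stdNormalPDF ((κ + ω κ ^ 2 / 2) / ω κ) * ω' κ := by
  funext κ
  rw [(hasDerivAt_putPrice (hω κ) (hne κ)).deriv, ← mul_assoc, ← exp_add, neg_add_cancel,
    exp_zero, one_mul]

lemma hasDerivAt_impliedCDF {ω ω' : ℝ → ℝ} {w'' κ : ℝ} (hω : HasDerivAt ω (ω' κ) κ)
    (hω' : HasDerivAt ω' w'' κ) (hκ : ω κ ≠ 0) :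
    HasDerivAt (fun k => stdNormalCDF ((k + ω k ^ 2 / 2) / ω k)
        + stdNormalPDF ((k + ω k ^ 2 / 2) / ω k) * ω' k)
      ((stdNormalPDF ((κ + ω κ ^ 2 / 2) / ω κ) / ω κ)
        * ((1 - (κ / ω κ) * ω' κ) ^ 2 - (1 / 4) * (ω κ * ω' κ) ^ 2 + ω κ * w'')) κ := by
  have hplus := hω.pivot_add hκ
  refine (((hasDerivAt_stdNormalCDF _).comp κ hplus).add
    (((hasDerivAt_stdNormalPDF _).comp κ hplus).mul hω')).congr_deriv ?_
  simp only [Function.comp_apply]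
  field_simp
  ring

theorem implied_density_correction (ω ω' ω'' : ℝ → ℝ)
    (hpos : ∀ κ, 0 < ω κ)
    (hderiv : ∀ κ, HasDerivAt ω (ω' κ) κ)
    (hderiv2 : ∀ κ, HasDerivAt ω' (ω'' κ) κ)
    (P : ℝ → ℝ)
    (hP : P = fun κ => Real.exp κ * stdNormalCDF ((κ + ω κ ^ 2 / 2) / ω κ)
      - stdNormalCDF ((κ - ω κ ^ 2 / 2) / ω κ)) :
    ∀ κ, HasDerivAt (fun k => Real.exp (-k) * deriv P k)
      ((stdNormalPDF ((κ + ω κ ^ 2 / 2) / ω κ) / ω κ)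
        * ((1 - (κ / ω κ) * ω' κ) ^ 2 - (1 / 4) * (ω κ * ω' κ) ^ 2 + ω κ * ω'' κ)) κ := by
  have hne : ∀ κ, ω κ ≠ 0 := fun κ => (hpos κ).ne'
  intro κ
  rw [hP, exp_neg_mul_deriv_putPrice hderiv hne]
  exact hasDerivAt_impliedCDF (hderiv κ) (hderiv2 κ) (hne κ)
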